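/- Let $H = (V,S)$ be a signed hypergraph such that the underlying hypergraph has a $\beta$-leaf $v$, with signed edges containing $v$ given by $s_1 \subseteq s_2 \subseteq \cdots \subseteq s_k$, and suppose $S$ contains $s_i - v$ whenever $|s_i - v| \ge 2$. Let $H_1 := (V_1, S_v \cup P_v)$ with $V_1$ the underlying edge of $s_k$, $S_v = \{s_1, \dots, s_k\}$, $P_v = \{s_i - v : |s_i - v| \ge 2\}$, and let $H_2 := H - v$. If $(z_1, z_\cap) \in \mathrm{PBS}(H_1)$ and $(z'_\cap, z'_2) \in \mathrm{PBS}(H_2)$ satisfy $z_{p_i} = z'_{p_i}$ for every $i \in [k]$ (where $p_i := s_i - v$, interpreted as a coordinate or as $\sigma_{p_i}(z_u)$ when $|p_i| = 1$), then $(z_1, z'_\cap, z'_2) \in \mathrm{PBS}(H)$. -/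

import Mathlib

/-!
Glue the node values: the value at `v` is taken from the point of `PBS(H₁)`, all others from
the point of `PBS(H₂)`, and every edge coordinate is the signed monomial of its edge. An edge
avoiding `v` only sees values of the second point. An edge `sᵢ` through `v` lies in `V₁`, and
its monomial is the `v`-factor times the monomial of `pᵢ = sᵢ - v`; by the agreement
hypothesis the latter may be evaluated at the first point instead, which gives back the
`sᵢ`-coordinate of the first point.
-/

open Finset

/-- A signed edge on node set `V`: an underlying edge together with a sign function
(`true` = +1, `false` = -1; only values on `edge` are relevant). -/
structure SignedEdge (V : Type*) where
  edge : Finset V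
  sign : V → Bool

instance {V : Type*} [DecidableEq V] [Fintype V] : DecidableEq (SignedEdge V) :=
  fun a b =>
    decidable_of_iff (a.edge = b.edge ∧ a.sign = b.sign) (by
      constructor
      · rintro ⟨h1, h2⟩; cases a; cases b; simp_all
      · rintro rfl; exact ⟨rfl, rfl⟩)

/-- Removal of a node from a signed edge (`s - v`). -/
def SignedEdge.eraseNode {V : Type*} [DecidableEq V] (t : SignedEdge V) (v : V) :
    SignedEdge V :=
  ⟨t.edge.erase v, t.sign⟩

/-- The pseudo-Boolean set of the signed hypergraph with node set `W` and signed edge set `S`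
(edges contained in `W`), as a subset of `ℝ^W × ℝ^S`. -/
def PBS {V : Type*} [DecidableEq V] (W : Finset V) (S : Finset (SignedEdge V)) :
    Set ((↥W → ℝ) × (↥S → ℝ)) :=
  {p | (∀ v, p.1 v = 0 ∨ p.1 v = 1) ∧
    ∀ s : ↥S, p.2 s =
      ∏ v ∈ W.attach.filter (fun v => ↑v ∈ (↑s : SignedEdge V).edge),
        (if (↑s : SignedEdge V).sign ↑v then p.1 v else 1 - p.1 v)}

variable {V : Type*} [Fintype V] [DecidableEq V]

/-- The signed edges `S_v = {s₁, …, s_k}` containing the β-leaf `v`. -/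
def edgesAt (k : ℕ) (s : Fin (k + 1) → SignedEdge V) : Finset (SignedEdge V) :=
  Finset.image s Finset.univ

/-- The signed edges `P_v = {sᵢ - v : |sᵢ - v| ≥ 2}`. -/
def erasedAt (k : ℕ) (s : Fin (k + 1) → SignedEdge V) (v : V) : Finset (SignedEdge V) :=
  (Finset.univ.image fun i => (s i).eraseNode v).filter fun t => 2 ≤ t.edge.card

/-- The signed edges of `H - v`. -/
def removedEdges (S : Finset (SignedEdge V)) (v : V) : Finset (SignedEdge V) :=
  (S.image fun t => t.eraseNode v).filter fun t => 1 ≤ t.edge.card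

open Function

section SignedProd

variable {α : Type*}

def signedProd (σ : α → Bool) (E : Finset α) (f : α → ℝ) : ℝ :=
  ∏ u ∈ E, if σ u then f u else 1 - f u

theorem signedProd_congr {σ : α → Bool} {E : Finset α} {f g : α → ℝ}
    (h : ∀ u ∈ E, f u = g u) : signedProd σ E f = signedProd σ E g :=
  Finset.prod_congr rfl fun u hu => by rw [h u hu]

theorem signedProd_eq_mul_erase [DecidableEq α] {σ : α → Bool} {E : Finset α} {v : α}
    (f : α → ℝ) (hv : v ∈ E) :
    signedProd σ E f = (if σ v then f v else 1 - f v) * signedProd σ (E.erase v) f :=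
  (Finset.mul_prod_erase E _ hv).symm

theorem signedProd_update_eq [DecidableEq α] {σ : α → Bool} {E : Finset α} {v : α}
    {f g : α → ℝ} (hv : v ∈ E)
    (h : signedProd σ (E.erase v) f = signedProd σ (E.erase v) g) :
    signedProd σ E (update f v (g v)) = signedProd σ E g := by
  have hupdate : signedProd σ (E.erase v) (update f v (g v)) = signedProd σ (E.erase v) f :=
    signedProd_congr fun u hu => update_of_ne (Finset.ne_of_mem_erase hu) _ _
  rw [signedProd_eq_mul_erase _ hv, signedProd_eq_mul_erase g hv, hupdate, h, update_self]

theorem signedProd_update_of_notMem [DecidableEq α] {σ : α → Bool} {E : Finset α} {v : α}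
    (f : α → ℝ) (x : ℝ) (hv : v ∉ E) :
    signedProd σ E (update f v x) = signedProd σ E f :=
  signedProd_congr fun _ hu => update_of_ne (ne_of_mem_of_not_mem hu hv) _ _

theorem prod_attach_filter_eq_signedProd [DecidableEq α] {W E : Finset α} (hE : E ⊆ W)
    (σ : α → Bool) (g : W → ℝ) :
    ∏ u ∈ W.attach.filter (fun u => ↑u ∈ E), (if σ ↑u then g u else 1 - g u) =
      signedProd σ E (extend Subtype.val g 0) := by
  have hg : ∀ u : W, g u = extend Subtype.val g 0 u := fun u =>
    (Subtype.val_injective.extend_apply g 0 u).symm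
  simp_rw [hg]
  set F := extend Subtype.val g 0
  rw [Finset.prod_filter,
    Finset.prod_attach W (fun u => if u ∈ E then (if σ u then F u else 1 - F u) else 1),
    ← Finset.prod_filter, Finset.filter_mem_eq_inter, Finset.inter_eq_right.mpr hE]
  rfl

end SignedProd

namespace PBS

variable {α : Type*} [DecidableEq α] {W : Finset α} {S : Finset (SignedEdge α)}
  {p : (W → ℝ) × (S → ℝ)}

theorem extend_eq_zero_or_one (hp : p ∈ PBS W S) (u : α) :
    extend Subtype.val p.1 0 u = 0 ∨ extend Subtype.val p.1 0 u = 1 := by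
  by_cases hu : u ∈ W
  · rw [show u = ((⟨u, hu⟩ : W) : α) from rfl, Subtype.val_injective.extend_apply]
    exact hp.1 _
  · left
    rw [extend_apply' _ _ _ fun ⟨w, hw⟩ => hu (hw ▸ w.2)]
    rfl

theorem snd_eq_signedProd (hp : p ∈ PBS W S) (t : S) (ht : (t : SignedEdge α).edge ⊆ W) :
    p.2 t = signedProd (t : SignedEdge α).sign (t : SignedEdge α).edge
      (extend Subtype.val p.1 0) := by
  rw [hp.2 t, prod_attach_filter_eq_signedProd ht]

end PBS

def pbsPoint (S : Finset (SignedEdge V)) (f : V → ℝ) :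
    (↥(Finset.univ : Finset V) → ℝ) × (S → ℝ) :=
  (fun u => f u, fun t => signedProd (t : SignedEdge V).sign (t : SignedEdge V).edge f)

theorem pbsPoint_mem_PBS (S : Finset (SignedEdge V)) {f : V → ℝ}
    (hf : ∀ u, f u = 0 ∨ f u = 1) : pbsPoint S f ∈ PBS Finset.univ S := by
  refine ⟨fun u => hf u, fun t => ?_⟩
  have hext : extend Subtype.val (fun u : (Finset.univ : Finset V) => f u) 0 = f :=
    funext fun u => Subtype.val_injective.extend_apply _ (0 : V → ℝ) ⟨u, Finset.mem_univ u⟩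
  rw [prod_attach_filter_eq_signedProd (Finset.subset_univ _)]
  exact congrArg (signedProd _ _) hext.symm

theorem exists_eq_of_mem_edgesAt_union_erasedAt {k : ℕ} {s : Fin (k + 1) → SignedEdge V}
    {v : V} {t : SignedEdge V} (ht : t ∈ edgesAt k s ∪ erasedAt k s v) (hv : v ∈ t.edge) :
    ∃ i, s i = t := by
  rcases Finset.mem_union.mp ht with ht | ht
  · simpa [edgesAt] using ht
  · obtain ⟨i, rfl⟩ := (Finset.mem_image.mp (Finset.mem_filter.mp ht).1).imp fun _ h => h.2.symm
    simp [SignedEdge.eraseNode] at hv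

theorem stmt_8_general (S : Finset (SignedEdge V)) (v : V) (k : ℕ) (s : Fin (k + 1) → SignedEdge V)
    (hchain : ∀ i j : Fin (k + 1), i ≤ j → (s i).edge ⊆ (s j).edge)
    (a : (↥((s (Fin.last k)).edge) → ℝ) × (↥(edgesAt k s ∪ erasedAt k s v) → ℝ))
    (ha : a ∈ PBS ((s (Fin.last k)).edge) (edgesAt k s ∪ erasedAt k s v))
    (b : (↥(Finset.univ.erase v) → ℝ) × (↥(removedEdges S v) → ℝ))
    (hb : b ∈ PBS (Finset.univ.erase v) (removedEdges S v))
    (hagree : ∀ i : Fin (k + 1),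
      (∏ u ∈ ((s (Fin.last k)).edge).attach.filter
          (fun u => ↑u ∈ (s i).edge.erase v),
        (if (s i).sign ↑u then a.1 u else 1 - a.1 u)) =
      ∏ u ∈ (Finset.univ.erase v).attach.filter
          (fun u => ↑u ∈ (s i).edge.erase v),
        (if (s i).sign ↑u then b.1 u else 1 - b.1 u)) :
    ∃ c ∈ PBS (Finset.univ : Finset V) S,
      (∀ hv1 : v ∈ (s (Fin.last k)).edge,
        c.1 ⟨v, Finset.mem_univ v⟩ = a.1 ⟨v, hv1⟩) ∧
      (∀ u, ∀ hu : u ∈ Finset.univ.erase v,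
        c.1 ⟨u, Finset.mem_univ u⟩ = b.1 ⟨u, hu⟩) ∧
      (∀ t, ∀ ht : t ∈ S, ∀ ht1 : t ∈ edgesAt k s ∪ erasedAt k s v,
        v ∈ t.edge → c.2 ⟨t, ht⟩ = a.2 ⟨t, ht1⟩) ∧
      (∀ t, ∀ ht : t ∈ S, ∀ ht2 : t ∈ removedEdges S v,
        v ∉ t.edge → c.2 ⟨t, ht⟩ = b.2 ⟨t, ht2⟩) := by
  set ea := extend Subtype.val a.1 0
  set eb := extend Subtype.val b.1 0
  refine ⟨pbsPoint S (update eb v (ea v)), pbsPoint_mem_PBS S fun u => ?_, fun hv => ?_,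
    fun u hu => ?_, fun t _ ht htv => ?_, fun t _ ht htv => ?_⟩
  · rcases eq_or_ne u v with rfl | hu
    · simpa only [update_self] using PBS.extend_eq_zero_or_one ha u
    · simpa only [update_of_ne hu] using PBS.extend_eq_zero_or_one hb u
  · exact (update_self ..).trans (Subtype.val_injective.extend_apply a.1 0 ⟨v, hv⟩)
  · exact (update_of_ne (Finset.ne_of_mem_erase hu) ..).trans
      (Subtype.val_injective.extend_apply b.1 0 ⟨u, hu⟩)
  · obtain ⟨i, rfl⟩ := exists_eq_of_mem_edgesAt_union_erasedAt ht htv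
    have hsub := hchain i (Fin.last k) (Fin.le_last i)
    have hagree_i : signedProd (s i).sign ((s i).edge.erase v) ea =
        signedProd (s i).sign ((s i).edge.erase v) eb := by
      simpa only [prod_attach_filter_eq_signedProd ((Finset.erase_subset v _).trans hsub),
        prod_attach_filter_eq_signedProd (Finset.erase_subset_erase v (Finset.subset_univ _))]
        using hagree i
    rw [PBS.snd_eq_signedProd ha ⟨s i, ht⟩ hsub]
    exact signedProd_update_eq htv hagree_i.symm
  · have hsub : t.edge ⊆ Finset.univ.erase v := fun u hu =>
      Finset.mem_erase.mpr ⟨fun h => htv (h ▸ hu), Finset.mem_univ u⟩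
    rw [PBS.snd_eq_signedProd hb ⟨t, ht⟩ hsub]
    exact signedProd_update_of_notMem eb _ htv

/-- (Combination claim.) Let `H = (V, S)` be a signed hypergraph with a
β-leaf `v` whose signed edges containing `v` are `s₁ ⊆ ⋯ ⊆ s_k`, and with `sᵢ - v ∈ S`
whenever `|sᵢ - v| ≥ 2`. Let `H₁ = (V₁, S_v ∪ P_v)` be the pointed part (on `V₁`, the
underlying edge of `s_k`) and `H₂ = H - v`. If a point of `PBS(H₁)` and a point of
`PBS(H₂)` agree on the values `z_{pᵢ}`, `pᵢ = sᵢ - v` (expressed as signed products, which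
for `|pᵢ| ≥ 2` coincide with the respective edge coordinates), then the combined point —
taking the value at `v` and the `S_v`-coordinates from the first point and all remaining
coordinates from the second — lies in `PBS(H)`. -/
theorem stmt_8 (S : Finset (SignedEdge V)) (hcard : ∀ t ∈ S, 2 ≤ t.edge.card)
    (v : V) (k : ℕ) (s : Fin (k + 1) → SignedEdge V)
    (hmem : ∀ i, s i ∈ S) (hv : ∀ i, v ∈ (s i).edge)
    (hchain : ∀ i j : Fin (k + 1), i ≤ j → (s i).edge ⊆ (s j).edge)
    (hexact : ∀ t ∈ S, v ∈ t.edge → ∃ i, t = s i)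
    (hclosed : ∀ i, 2 ≤ ((s i).edge.erase v).card → (s i).eraseNode v ∈ S)
    (a : (↥((s (Fin.last k)).edge) → ℝ) × (↥(edgesAt k s ∪ erasedAt k s v) → ℝ))
    (ha : a ∈ PBS ((s (Fin.last k)).edge) (edgesAt k s ∪ erasedAt k s v))
    (b : (↥(Finset.univ.erase v) → ℝ) × (↥(removedEdges S v) → ℝ))
    (hb : b ∈ PBS (Finset.univ.erase v) (removedEdges S v))
    (hagree : ∀ i : Fin (k + 1),
      (∏ u ∈ ((s (Fin.last k)).edge).attach.filter
          (fun u => ↑u ∈ (s i).edge.erase v),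
        (if (s i).sign ↑u then a.1 u else 1 - a.1 u)) =
      ∏ u ∈ (Finset.univ.erase v).attach.filter
          (fun u => ↑u ∈ (s i).edge.erase v),
        (if (s i).sign ↑u then b.1 u else 1 - b.1 u)) :
    ∃ c ∈ PBS (Finset.univ : Finset V) S,
      (∀ hv1 : v ∈ (s (Fin.last k)).edge,
        c.1 ⟨v, Finset.mem_univ v⟩ = a.1 ⟨v, hv1⟩) ∧
      (∀ u, ∀ hu : u ∈ Finset.univ.erase v,
        c.1 ⟨u, Finset.mem_univ u⟩ = b.1 ⟨u, hu⟩) ∧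
      (∀ t, ∀ ht : t ∈ S, ∀ ht1 : t ∈ edgesAt k s ∪ erasedAt k s v,
        v ∈ t.edge → c.2 ⟨t, ht⟩ = a.2 ⟨t, ht1⟩) ∧
      (∀ t, ∀ ht : t ∈ S, ∀ ht2 : t ∈ removedEdges S v,
        v ∉ t.edge → c.2 ⟨t, ht⟩ = b.2 ⟨t, ht2⟩) :=
  stmt_8_general S v k s hchain a ha b hb hagree
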